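/- arXiv:2108.11577 — 2 statements merged into one kernel-verified Lean document; each statement's English description precedes it below -/
import Mathlib

section
/- Suppose θ(·) : ℝ → ℝ^p is differentiable at ε = 0 with θ(0) = θ*, the function L(·; D) + ε(ℓ(z̃, ·) − ℓ(z, ·)) is twice continuously differentiable in θ, and for every ε in a neighborhood of 0 the stationarity condition ∇_θ L(θ(ε); D) + ε ∇_θ ℓ(z̃, θ(ε)) − ε ∇_θ ℓ(z, θ(ε)) = 0 holds. Then the derivative of the model parameters with respect to the up-weighting parameter satisfies H_{θ*} · θ′(0) = −( ∇_θ ℓ(z̃, θ*) − ∇_θ ℓ(z, θ*) ), where H_{θ*} = ∇²_θ L(θ*; D); in particular, if H_{θ*} is invertible, θ′(0) = −H_{θ*}^{-1}( ∇_θ ℓ(z̃, θ*) − ∇_θ ℓ(z, θ*) ). -/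
/-!
Differentiate the stationarity identity `∇L(θ ε) + ε • (∇ℓ(z̃, ·) − ∇ℓ(z, ·))(θ ε) = 0` at
`ε = 0`: the chain rule turns the first term into `H_{θ*} θ′(0)`, and the product rule leaves
only `∇ℓ(z̃, θ*) − ∇ℓ(z, θ*)` from the second, since its factor `ε` vanishes at `0`.
-/

open Filter Topology InnerProductSpace

theorem ContDiff.differentiable_gradient {F : Type*} [NormedAddCommGroup F]
    [InnerProductSpace ℝ F] [CompleteSpace F] {f : F → ℝ} (hf : ContDiff ℝ 2 f) :
    Differentiable ℝ (gradient f) :=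
  (toDual ℝ F).symm.toContinuousLinearEquiv.differentiable.comp
    ((hf.fderiv_right (m := 1) le_rfl).differentiable one_ne_zero)

theorem fderiv_apply_deriv_eq_neg_of_eventually_add_smul_eq_zero
    {E F : Type*} [NormedAddCommGroup E] [NormedSpace ℝ E]
    [NormedAddCommGroup F] [NormedSpace ℝ F] {F₀ F₁ : E → F} {θ : ℝ → E}
    (hF₀ : DifferentiableAt ℝ F₀ (θ 0)) (hF₁ : DifferentiableAt ℝ F₁ (θ 0))
    (hθ : DifferentiableAt ℝ θ 0) (h : ∀ᶠ ε in 𝓝 0, F₀ (θ ε) + ε • F₁ (θ ε) = 0) :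
    fderiv ℝ F₀ (θ 0) (deriv θ 0) = -F₁ (θ 0) := by
  have hsum : HasDerivAt (fun ε => F₀ (θ ε) + ε • F₁ (θ ε))
      (fderiv ℝ F₀ (θ 0) (deriv θ 0) + F₁ (θ 0)) 0 := by
    have hF₁θ := hF₁.hasFDerivAt.comp_hasDerivAt 0 hθ.hasDerivAt
    refine ((hF₀.hasFDerivAt.comp_hasDerivAt 0 hθ.hasDerivAt).add
      ((hasDerivAt_id (0 : ℝ)).smul hF₁θ)).congr_deriv ?_
    simp
  have hzero : HasDerivAt (fun ε => F₀ (θ ε) + ε • F₁ (θ ε)) 0 0 :=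
    (hasDerivAt_const (0 : ℝ) (0 : F)).congr_of_eventuallyEq h
  exact eq_neg_of_add_eq_zero_left (hsum.unique hzero)

theorem deriv_upweighted_minimizer_eq_neg_inv_hessian_grad_diff_general
    {d p : ℕ} {Y : Type*}
    (ℓ : (EuclideanSpace ℝ (Fin d) × Y) → EuclideanSpace ℝ (Fin p) → ℝ)
    (L : EuclideanSpace ℝ (Fin p) → ℝ)
    (z ztil : EuclideanSpace ℝ (Fin d) × Y)
    -- `L + ε (ℓ(z̃, ·) − ℓ(z, ·))` is twice continuously differentiable in `θ` for all `ε`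
    (hC2L : ContDiff ℝ 2 L) (hC2til : ContDiff ℝ 2 (ℓ ztil)) (hC2z : ContDiff ℝ 2 (ℓ z))
    (θ : ℝ → EuclideanSpace ℝ (Fin p)) (θs : EuclideanSpace ℝ (Fin p))
    (hθ0 : θ 0 = θs) (hdiff : DifferentiableAt ℝ θ 0)
    (ε₀ : ℝ) (hε₀ : 0 < ε₀)
    (hstat : ∀ ε : ℝ, |ε| < ε₀ →
      gradient L (θ ε) + ε • gradient (ℓ ztil) (θ ε) - ε • gradient (ℓ z) (θ ε) = 0) :
    fderiv ℝ (gradient L) θs (deriv θ 0) =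
      -(gradient (ℓ ztil) θs - gradient (ℓ z) θs) ∧
    ∀ Hinv : EuclideanSpace ℝ (Fin p) →L[ℝ] EuclideanSpace ℝ (Fin p),
      (∀ v, Hinv (fderiv ℝ (gradient L) θs v) = v) →
      deriv θ 0 = -(Hinv (gradient (ℓ ztil) θs - gradient (ℓ z) θs)) := by
  have hstat_near_zero : ∀ᶠ ε in 𝓝 (0 : ℝ),
      gradient L (θ ε) + ε • (gradient (ℓ ztil) - gradient (ℓ z)) (θ ε) = 0 := by
    filter_upwards [Metric.ball_mem_nhds (0 : ℝ) hε₀] with ε hε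
    rw [Pi.sub_apply, smul_sub, ← add_sub_assoc]
    exact hstat ε (by simpa [Real.dist_eq] using hε)
  have hH : fderiv ℝ (gradient L) θs (deriv θ 0) =
      -(gradient (ℓ ztil) θs - gradient (ℓ z) θs) := by
    subst hθ0
    exact fderiv_apply_deriv_eq_neg_of_eventually_add_smul_eq_zero
      (hC2L.differentiable_gradient _)
      ((hC2til.differentiable_gradient _).sub (hC2z.differentiable_gradient _)) hdiff hstat_near_zero
  refine ⟨hH, fun Hinv hHinv => ?_⟩
  rw [← hHinv (deriv θ 0), hH, map_neg]

/-- **Influence-function derivative of the up-weighted minimizer.** If `θ(ε)` satisfies the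
stationarity condition `∇L(θ(ε); D) + ε∇ℓ(z̃, θ(ε)) − ε∇ℓ(z, θ(ε)) = 0` in a neighborhood
of `0`, is differentiable at `ε = 0` with `θ(0) = θ*`, and the objective is twice
continuously differentiable, then `H_{θ*} θ′(0) = −(∇ℓ(z̃, θ*) − ∇ℓ(z, θ*))` with
`H_{θ*} = ∇²L(θ*; D)`; in particular if `H_{θ*}` is invertible,
`θ′(0) = −H_{θ*}^{-1}(∇ℓ(z̃, θ*) − ∇ℓ(z, θ*))`. -/
theorem deriv_upweighted_minimizer_eq_neg_inv_hessian_grad_diff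
    {d p n : ℕ} {Y : Type*}
    (ℓ : (EuclideanSpace ℝ (Fin d) × Y) → EuclideanSpace ℝ (Fin p) → ℝ)
    (Ω : EuclideanSpace ℝ (Fin p) → ℝ) (lam : ℝ)
    (D : Fin n → EuclideanSpace ℝ (Fin d) × Y)
    (L : EuclideanSpace ℝ (Fin p) → ℝ)
    (hLdef : L = fun θ => ∑ i, ℓ (D i) θ + lam * Ω θ)
    (z ztil : EuclideanSpace ℝ (Fin d) × Y)
    -- `L + ε (ℓ(z̃, ·) − ℓ(z, ·))` is twice continuously differentiable in `θ` for all `ε`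
    (hC2L : ContDiff ℝ 2 L) (hC2til : ContDiff ℝ 2 (ℓ ztil)) (hC2z : ContDiff ℝ 2 (ℓ z))
    (θ : ℝ → EuclideanSpace ℝ (Fin p)) (θs : EuclideanSpace ℝ (Fin p))
    (hθ0 : θ 0 = θs) (hdiff : DifferentiableAt ℝ θ 0)
    (ε₀ : ℝ) (hε₀ : 0 < ε₀)
    (hstat : ∀ ε : ℝ, |ε| < ε₀ →
      gradient L (θ ε) + ε • gradient (ℓ ztil) (θ ε) - ε • gradient (ℓ z) (θ ε) = 0) :
    fderiv ℝ (gradient L) θs (deriv θ 0) =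
      -(gradient (ℓ ztil) θs - gradient (ℓ z) θs) ∧
    ∀ Hinv : EuclideanSpace ℝ (Fin p) →L[ℝ] EuclideanSpace ℝ (Fin p),
      (∀ v, Hinv (fderiv ℝ (gradient L) θs v) = v) →
      deriv θ 0 = -(Hinv (gradient (ℓ ztil) θs - gradient (ℓ z) θs)) :=
  deriv_upweighted_minimizer_eq_neg_inv_hessian_grad_diff_general ℓ L z ztil hC2L hC2til hC2z θ θs
    hθ0 hdiff ε₀ hε₀ hstat
end

section
/- Fix ε ∈ (0,1), ε′ > 0 and c > √(2 ln(1.5)) (so that δ := 1.5·e^{−c²/2} < 1), and let b ∈ ℝ^p be a random vector whose coordinates are independent Gaussians with mean 0 and standard deviation σ = c·ε′/ε. Then for every fixed vector v ∈ ℝ^p with ‖v‖₂ ≤ ε′, with probability at least 1 − δ over the draw of b the ratio of the Gaussian density p at b and at b + v satisfies e^{−ε} ≤ p(b)/p(b+v) ≤ e^{ε}. -/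
/-!
The log density ratio is affine in a single Gaussian variable: since
`‖b + v‖² - ‖b‖² = 2⟪v, b⟫ + ‖v‖²`, we have `log (p(b) / p(b + v)) = (2⟪v, b⟫ + ‖v‖²) / (2σ²)`,
and `⟪v, b⟫ ~ N(0, ‖v‖² σ²)`. The event is therefore an interval `[A, B]` for `⟪v, b⟫`, and
the two Gaussian tails `P(X > u) ≤ e^{-u²/(2s)} / 2` (compare `x ↦ e^{-x²/(2s)}` on `x > u`
with `e^{-u²/(2s)}` times the density of `N(u, s)`) cost at most `e^{-c²/2} / 2` below and
`e^{ε/2} e^{-c²/2} / 2 ≤ e^{-c²/2}` above.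
-/

open MeasureTheory ProbabilityTheory
open Real Set
open scoped NNReal ENNReal InnerProductSpace

lemma charFun_map_inner {ι : Type*} [Fintype ι] (μ : Measure (EuclideanSpace ℝ ι))
    (v : EuclideanSpace ℝ ι) (t : ℝ) :
    charFun (μ.map fun b => ⟪v, b⟫_ℝ) t = charFun μ (t • v) := by
  rw [charFun_apply, charFun_apply, integral_map (by fun_prop) (by fun_prop)]
  simp [real_inner_smul_right, real_inner_comm, mul_comm]

lemma map_inner_pi_gaussianReal {ι : Type*} [Fintype ι] (s : ℝ≥0) (v : EuclideanSpace ℝ ι) :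
    ((Measure.pi fun _ : ι => gaussianReal 0 s).map (MeasurableEquiv.toLp 2 (ι → ℝ))).map
        (fun b => ⟪v, b⟫_ℝ) = gaussianReal 0 (‖v‖₊ ^ 2 * s) := by
  refine Measure.ext_of_charFun (funext fun t => ?_)
  rw [charFun_map_inner, MeasurableEquiv.coe_toLp, charFun_pi]
  simp_rw [charFun_gaussianReal, ← Complex.exp_sum]
  congr 1
  simp only [PiLp.smul_apply, smul_eq_mul, Complex.ofReal_mul, Complex.ofReal_zero, mul_zero,
    zero_mul, zero_sub, Finset.sum_neg_distrib, NNReal.coe_mul, NNReal.coe_pow, coe_nnnorm,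
    EuclideanSpace.real_norm_sq_eq, Complex.ofReal_sum, Complex.ofReal_pow, neg_inj]
  rw [Finset.sum_mul, Finset.sum_mul, Finset.sum_div]
  exact Finset.sum_congr rfl fun i _ => by ring

lemma gaussianReal_Ioi_zero {s : ℝ≥0} (hs : s ≠ 0) : gaussianReal 0 s (Ioi 0) = 2⁻¹ := by
  have hsymm : gaussianReal 0 s (Iio 0) = gaussianReal 0 s (Ioi 0) := by
    conv_lhs =>
      rw [← neg_zero, ← gaussianReal_map_neg, Measure.map_apply measurable_neg measurableSet_Iio]
    simp
  have hatom : gaussianReal 0 s {0} = 0 :=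
    gaussianReal_absolutelyContinuous 0 hs Real.volume_singleton
  have hsum : gaussianReal 0 s (Iio 0) + gaussianReal 0 s (Ioi 0) = 1 := by
    rw [← measure_union Ioi_disjoint_Iio_same.symm measurableSet_Ioi, Iio_union_Ioi,
      prob_compl_eq_one_sub (measurableSet_singleton 0), hatom, tsub_zero]
  rw [hsymm, ← two_mul, mul_comm] at hsum
  exact ENNReal.eq_inv_of_mul_eq_one_left hsum

lemma gaussianPDFReal_le_exp_mul_gaussianPDFReal (s : ℝ≥0) {u x : ℝ} (hu : 0 ≤ u)
    (hx : u ≤ x) : gaussianPDFReal 0 s x ≤ exp (-u ^ 2 / (2 * s)) * gaussianPDFReal u s x := by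
  simp only [gaussianPDFReal, sub_zero]
  rw [mul_left_comm, ← exp_add]
  gcongr
  rw [← add_div]
  refine div_le_div_of_nonneg_right ?_ (by positivity)
  nlinarith

lemma gaussianReal_Ioi_le (s : ℝ≥0) {u t : ℝ} (hu : 0 ≤ u) (ht : t * s ≤ u ^ 2) :
    gaussianReal 0 s (Ioi u) ≤ ENNReal.ofReal (exp (-t / 2) / 2) := by
  rcases eq_or_ne s 0 with rfl | hs
  · simp [hu]
  have hs' : (0 : ℝ) < s := by positivity
  calc gaussianReal 0 s (Ioi u) = ∫⁻ x in Ioi u, gaussianPDF 0 s x := gaussianReal_apply 0 hs _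
    _ ≤ ∫⁻ x in Ioi u, ENNReal.ofReal (exp (-u ^ 2 / (2 * s))) * gaussianPDF u s x := by
      refine setLIntegral_mono' measurableSet_Ioi fun x hx => ?_
      rw [gaussianPDF, gaussianPDF, ← ENNReal.ofReal_mul (exp_nonneg _)]
      exact ENNReal.ofReal_le_ofReal
        (gaussianPDFReal_le_exp_mul_gaussianPDFReal s hu (le_of_lt hx))
    _ = ENNReal.ofReal (exp (-u ^ 2 / (2 * s))) * gaussianReal 0 s (Ioi 0) := by
      rw [lintegral_const_mul _ (measurable_gaussianPDF _ _), ← gaussianReal_apply u hs,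
        ← zero_add u, ← gaussianReal_map_add_const,
        Measure.map_apply (measurable_add_const u) measurableSet_Ioi]
      simp
    _ ≤ ENNReal.ofReal (exp (-t / 2) / 2) := by
      rw [gaussianReal_Ioi_zero hs, ← ENNReal.ofReal_ofNat, ← ENNReal.ofReal_inv_of_pos two_pos,
        ← ENNReal.ofReal_mul (exp_nonneg _), ← div_eq_mul_inv]
      refine ENNReal.ofReal_le_ofReal (div_le_div_of_nonneg_right (exp_le_exp.2 ?_) two_pos.le)
      rw [div_le_div_iff₀ (by positivity) two_pos]
      nlinarith

lemma ofReal_one_sub_le_gaussianReal_Icc (s : ℝ≥0) {a b t₁ t₂ : ℝ} (ha : a ≤ 0) (hb : 0 ≤ b)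
    (h₁ : t₁ * s ≤ a ^ 2) (h₂ : t₂ * s ≤ b ^ 2) :
    ENNReal.ofReal (1 - (exp (-t₁ / 2) / 2 + exp (-t₂ / 2) / 2)) ≤
      gaussianReal 0 s (Icc a b) := by
  have hlower : gaussianReal 0 s (Iio a) ≤ ENNReal.ofReal (exp (-t₁ / 2) / 2) := by
    rw [← neg_zero, ← gaussianReal_map_neg, Measure.map_apply measurable_neg measurableSet_Iio,
      neg_preimage, neg_Iio]
    exact gaussianReal_Ioi_le s (neg_nonneg.2 ha) (by rwa [neg_sq])
  have hcompl : gaussianReal 0 s (Icc a b)ᶜ ≤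
      ENNReal.ofReal (exp (-t₁ / 2) / 2 + exp (-t₂ / 2) / 2) := by
    rw [← Ici_inter_Iic, compl_inter, compl_Ici, compl_Iic,
      ENNReal.ofReal_add (by positivity) (by positivity)]
    exact (measure_union_le _ _).trans (add_le_add hlower (gaussianReal_Ioi_le s hb h₂))
  rw [ENNReal.ofReal_sub _ (by positivity), ENNReal.ofReal_one, tsub_le_iff_right,
    ← prob_add_prob_compl (μ := gaussianReal 0 s) measurableSet_Icc]
  gcongr

lemma prod_gaussianPDFReal_eq {ι : Type*} [Fintype ι] (s : ℝ≥0) (x : EuclideanSpace ℝ ι) :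
    ∏ i, gaussianPDFReal 0 s (x i) =
      (√(2 * π * s))⁻¹ ^ Fintype.card ι * exp (-‖x‖ ^ 2 / (2 * s)) := by
  simp only [gaussianPDFReal, sub_zero, Finset.prod_mul_distrib, Finset.prod_const,
    Finset.card_univ, ← exp_sum, EuclideanSpace.real_norm_sq_eq, ← Finset.sum_div,
    Finset.sum_neg_distrib, neg_div]

lemma prod_gaussianPDFReal_div_prod_gaussianPDFReal_add {ι : Type*} [Fintype ι] {s : ℝ≥0}
    (hs : s ≠ 0) (x v : EuclideanSpace ℝ ι) :
    (∏ i, gaussianPDFReal 0 s (x i)) / ∏ i, gaussianPDFReal 0 s ((x + v) i) =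
      exp ((2 * ⟪v, x⟫_ℝ + ‖v‖ ^ 2) / (2 * s)) := by
  have hs' : (0 : ℝ) < s := by positivity
  rw [prod_gaussianPDFReal_eq, prod_gaussianPDFReal_eq,
    mul_div_mul_left _ _ (by positivity), ← exp_sub, norm_add_sq_real, real_inner_comm]
  congr 1
  field_simp
  ring

lemma exp_le_exp_affine_div_le_exp_iff_mem_Icc {ε s y w : ℝ} (hs : 0 < s) :
    (exp (-ε) ≤ exp ((2 * y + w) / (2 * s)) ∧ exp ((2 * y + w) / (2 * s)) ≤ exp ε) ↔
      y ∈ Icc (-(s * ε) - w / 2) (s * ε - w / 2) := by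
  rw [exp_le_exp, exp_le_exp, le_div_iff₀ (by positivity), div_le_iff₀ (by positivity), mem_Icc]
  constructor <;> rintro ⟨h₁, h₂⟩ <;> constructor <;> linarith

lemma calibrated_interval_bounds {ε ε' c S V : ℝ} (hε : 0 < ε) (hc : ε ≤ 2 * c ^ 2)
    (hS : 0 < S) (hSε : S * ε ^ 2 = c ^ 2 * ε' ^ 2) (hV₀ : 0 ≤ V) (hV : V ≤ ε' ^ 2) :
    0 ≤ S * ε - V / 2 ∧ c ^ 2 * (V * S) ≤ (-(S * ε) - V / 2) ^ 2 ∧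
      (c ^ 2 - ε) * (V * S) ≤ (S * ε - V / 2) ^ 2 := by
  have hVε : V * ε ≤ 2 * (S * ε ^ 2) := by
    rw [hSε]; nlinarith [mul_le_mul_of_nonneg_left hc (sq_nonneg ε')]
  have hcVS : c ^ 2 * (V * S) ≤ S * (S * ε ^ 2) := by
    rw [hSε]; nlinarith [mul_le_mul_of_nonneg_left hV (mul_nonneg (sq_nonneg c) hS.le)]
  have hSεV : 0 ≤ S * ε * V := by positivity
  refine ⟨?_, ?_, ?_⟩ <;> nlinarith [sq_nonneg V]

lemma exp_neg_sq_half_add_le (c : ℝ) {ε : ℝ} (hε : ε < 1) :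
    exp (-c ^ 2 / 2) / 2 + exp (-(c ^ 2 - ε) / 2) / 2 ≤ 1.5 * exp (-c ^ 2 / 2) := by
  have hsplit : exp (-(c ^ 2 - ε) / 2) = exp (ε / 2) * exp (-c ^ 2 / 2) := by
    rw [← exp_add]; ring_nf
  have hhalf : exp (ε / 2) ≤ 2 := by
    calc exp (ε / 2) ≤ exp (1 / 2) := exp_le_exp.2 (by linarith)
      _ ≤ 2 := by
        have hsq : exp (1 / 2) * exp (1 / 2) = exp 1 := by rw [← exp_add]; norm_num
        nlinarith [exp_pos (1 / 2), exp_one_lt_d9]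
  rw [hsplit]
  nlinarith [exp_pos (-c ^ 2 / 2)]

/-- **Gaussian density-ratio concentration (Theorem 3, case 2).** Let `b ∈ ℝ^p` have
independent `N(0, σ²)` coordinates with `σ = c·ε′/ε`, where `0 < ε < 1`, `ε′ > 0` and
`c > √(2 ln 1.5)`. Then for every fixed `v` with `‖v‖₂ ≤ ε′`, with probability at least
`1 − δ` (with `δ = 1.5·e^{−c²/2}`) over the draw of `b`, the Gaussian density `p`
satisfies `e^{−ε} ≤ p(b)/p(b+v) ≤ e^{ε}`. -/
theorem gaussian_density_ratio_bound_whp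
    {p : ℕ} (ε ε' c σ : ℝ)
    (hε0 : 0 < ε) (hε1 : ε < 1) (hε' : 0 < ε')
    (hc : Real.sqrt (2 * Real.log 1.5) < c)
    (hσ : σ = c * ε' / ε)
    (v : EuclideanSpace ℝ (Fin p)) (hv : ‖v‖ ≤ ε')
    -- `μ` is the law of `b`, with independent `N(0, σ²)` coordinates
    (μ : Measure (EuclideanSpace ℝ (Fin p)))
    (hμ : μ = (Measure.pi fun _ : Fin p => gaussianReal 0 (Real.toNNReal (σ ^ 2))).map
        (MeasurableEquiv.toLp 2 (Fin p → ℝ)))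
    -- `pdf` is the density of the `p`-dimensional Gaussian `N(0, σ² I)`
    (pdf : EuclideanSpace ℝ (Fin p) → ℝ)
    (hpdf : ∀ b : EuclideanSpace ℝ (Fin p),
      pdf b = ∏ i, gaussianPDFReal 0 (Real.toNNReal (σ ^ 2)) (b i)) :
    ENNReal.ofReal (1 - 1.5 * Real.exp (-c ^ 2 / 2)) ≤
      μ {b : EuclideanSpace ℝ (Fin p) |
        Real.exp (-ε) ≤ pdf b / pdf (b + v) ∧ pdf b / pdf (b + v) ≤ Real.exp ε} := by
  set s := Real.toNNReal (σ ^ 2)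
  have hs : (s : ℝ) = σ ^ 2 := Real.coe_toNNReal _ (sq_nonneg σ)
  have hc₀ : 0 < c := (sqrt_nonneg _).trans_lt hc
  have hs₀ : (0 : ℝ) < s := by rw [hs, hσ]; positivity
  have hsε : (s : ℝ) * ε ^ 2 = c ^ 2 * ε' ^ 2 := by rw [hs, hσ]; field_simp
  have hevent : {b : EuclideanSpace ℝ (Fin p) |
      exp (-ε) ≤ pdf b / pdf (b + v) ∧ pdf b / pdf (b + v) ≤ exp ε} =
      (fun b => ⟪v, b⟫_ℝ) ⁻¹' Icc (-(s * ε) - ‖v‖ ^ 2 / 2) (s * ε - ‖v‖ ^ 2 / 2) := by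
    ext b
    simp only [mem_ofPred_eq, mem_preimage, hpdf,
      prod_gaussianPDFReal_div_prod_gaussianPDFReal_add (NNReal.coe_pos.1 hs₀).ne']
    exact exp_le_exp_affine_div_le_exp_iff_mem_Icc hs₀
  rw [hevent, ← Measure.map_apply (by fun_prop) measurableSet_Icc, hμ, map_inner_pi_gaussianReal]
  have hc₂ : ε ≤ 2 * c ^ 2 := by
    have hlog := one_sub_inv_le_log_of_pos (x := 1.5) (by norm_num)
    nlinarith [(sqrt_lt' hc₀).1 hc]
  obtain ⟨hB₀, hA, hB⟩ := calibrated_interval_bounds hε0 hc₂ hs₀ hsε (sq_nonneg ‖v‖)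
    (pow_le_pow_left₀ (norm_nonneg v) hv 2)
  calc ENNReal.ofReal (1 - 1.5 * exp (-c ^ 2 / 2))
      ≤ ENNReal.ofReal (1 - (exp (-c ^ 2 / 2) / 2 + exp (-(c ^ 2 - ε) / 2) / 2)) :=
        ENNReal.ofReal_le_ofReal (by linarith [exp_neg_sq_half_add_le c hε1])
    _ ≤ _ := ofReal_one_sub_le_gaussianReal_Icc _ (by nlinarith [mul_pos hs₀ hε0, sq_nonneg ‖v‖])
        hB₀ (by push_cast; exact hA) (by push_cast; exact hB)
end
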